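/- Let c > 0 and let α_i, β_i, α_j, β_j > 0 satisfy α_i + β_i = α_j + β_j = c, α_i < α_j, and α_j ≤ β_j. Let K ≥ 1 and let X₁, …, X_K be i.i.d. samples from the Beta distribution B(α_i, β_i) (density x^(α−1)(1−x)^(β−1)/B(α,β) on (0,1)) and Y₁, …, Y_K i.i.d. samples from B(α_j, β_j), with all 2K variables jointly independent. Write μ_i = α_i/c, μ_j = α_j/c, σ_i² = μ_i(1−μ_i)/(1+c), σ_j² = μ_j(1−μ_j)/(1+c), and let X̄, Ȳ be the sample means. Then P(X̄ ≥ Ȳ) ≤ (σ_i² + σ_j²) / (K (μ_j − μ_i)²) ≤ 2σ_j² / (K (μ_j − μ_i)²). -/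

import Mathlib

/-!
The difference `D = ∑ Yₖ - ∑ Xₖ` is a sum of `2K` independent square-integrable variables, with
mean `K (μj - μi) > 0` and variance `K (σi² + σj²)`. The event `X̄ ≥ Ȳ` is `{D ≤ 0}`, a deviation
of `D` from its mean by at least `K (μj - μi)`, so Chebyshev's inequality bounds its probability.
The Beta moments follow from `B(a + 1, b) = a / (a + b) · B(a, b)`, and the second inequality is
`σi² ≤ σj²`: `x (1 - x)` increases on `[0, 1/2]`.
-/

open MeasureTheory ProbabilityTheory

/-- The Beta distribution `B(a, b)`: the measure on `ℝ` supported on `(0,1)` with density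
`x ^ (a−1) * (1−x) ^ (b−1) / B(a,b)`, where `B(a,b) = ∫₀¹ x^(a−1) (1−x)^(b−1) dx` is the
Beta function. -/
noncomputable def betaMeasure (a b : ℝ) : Measure ℝ :=
  (volume.restrict (Set.Ioo (0 : ℝ) 1)).withDensity fun x =>
    ENNReal.ofReal (x ^ (a - 1) * (1 - x) ^ (b - 1) /
      ∫ y in Set.Ioo (0 : ℝ) 1, y ^ (a - 1) * (1 - y) ^ (b - 1))

open Set

section Chebyshev

variable {Ω : Type*} [MeasurableSpace Ω] {P : Measure Ω} [IsFiniteMeasure P]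

lemma measureReal_nonpos_le_variance_div_sq {S : Ω → ℝ} (hS : MemLp S 2 P) (hpos : 0 < P[S]) :
    P.real {ω | S ω ≤ 0} ≤ Var[S; P] / P[S] ^ 2 := by
  have hsub : {ω | S ω ≤ 0} ⊆ {ω | P[S] ≤ |S ω - P[S]|} := fun ω (hω : S ω ≤ 0) => by
    rw [mem_ofPred_eq, abs_sub_comm, abs_of_nonneg (by linarith)]
    linarith
  calc P.real {ω | S ω ≤ 0} ≤ P.real {ω | P[S] ≤ |S ω - P[S]|} := measureReal_mono hsub
    _ ≤ Var[S; P] / P[S] ^ 2 := by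
      rw [measureReal_def]
      exact ENNReal.toReal_le_of_le_ofReal (div_nonneg (variance_nonneg _ _) (sq_nonneg _))
        (meas_ge_le_variance_div_sq hS hpos)

lemma measureReal_sum_nonpos_le {ι : Type*} [Fintype ι] {Z : ι → Ω → ℝ}
    (hZ : ∀ i, MemLp (Z i) 2 P) (hindep : iIndepFun Z P) (hpos : 0 < ∑ i, P[Z i]) :
    P.real {ω | ∑ i, Z i ω ≤ 0} ≤ (∑ i, Var[Z i; P]) / (∑ i, P[Z i]) ^ 2 := by
  have hmean : P[∑ i, Z i] = ∑ i, P[Z i] := by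
    simpa only [Finset.sum_apply] using
      integral_finsetSum _ fun i _ => (hZ i).integrable one_le_two
  have hvar : Var[∑ i, Z i; P] = ∑ i, Var[Z i; P] :=
    IndepFun.variance_sum (fun i _ => hZ i) fun i _ j _ hij => hindep.indepFun hij
  rw [← hmean, ← hvar]
  rw [← hmean] at hpos
  simpa only [Finset.sum_apply] using
    measureReal_nonpos_le_variance_div_sq (memLp_finsetSum' _ fun i _ => hZ i) hpos

lemma measureReal_sum_le_sum_le {ι : Type*} [Fintype ι] [Nonempty ι] {X Y : ι → Ω → ℝ}
    (hindep : iIndepFun (Sum.elim X Y) P) (hX : ∀ i, MemLp (X i) 2 P) (hY : ∀ i, MemLp (Y i) 2 P)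
    {mX mY vX vY : ℝ} (hmX : ∀ i, P[X i] = mX) (hmY : ∀ i, P[Y i] = mY)
    (hvX : ∀ i, Var[X i; P] = vX) (hvY : ∀ i, Var[Y i; P] = vY) (hm : mX < mY) :
    P.real {ω | ∑ i, Y i ω ≤ ∑ i, X i ω} ≤
      (vX + vY) / (Fintype.card ι * (mY - mX) ^ 2) := by
  set Z : ι ⊕ ι → Ω → ℝ := Sum.elim (fun i => -X i) Y
  have hZindep : iIndepFun Z P := by
    convert hindep.comp (fun s => Sum.elim (fun _ => Neg.neg) (fun _ => id) s)
      (fun s => by cases s <;> [exact measurable_neg; exact measurable_id]) using 1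
    ext (s | s) <;> rfl
  have hZ : ∀ s, MemLp (Z s) 2 P := fun s => by
    cases s with
    | inl i => exact (hX i).neg
    | inr i => exact hY i
  have hmean : ∑ s, P[Z s] = Fintype.card ι * (mY - mX) := by
    simp only [Z, Fintype.sum_sum_type, Sum.elim_inl, Sum.elim_inr, Pi.neg_apply, integral_neg,
      hmX, hmY, Finset.sum_neg_distrib, Finset.sum_const, Finset.card_univ, nsmul_eq_mul]
    ring
  have hvar : ∑ s, Var[Z s; P] = Fintype.card ι * (vX + vY) := by
    simp only [Z, Fintype.sum_sum_type, Sum.elim_inl, Sum.elim_inr, variance_neg, hvX, hvY,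
      Finset.sum_const, Finset.card_univ, nsmul_eq_mul]
    ring
  have hset : {ω | ∑ i, Y i ω ≤ ∑ i, X i ω} = {ω | ∑ s, Z s ω ≤ 0} := by
    ext ω
    simp [Z, Fintype.sum_sum_type]
  have hK : (0 : ℝ) < Fintype.card ι := Nat.cast_pos.mpr Fintype.card_pos
  rw [hset]
  convert measureReal_sum_nonpos_le hZ hZindep (by rw [hmean]; exact mul_pos hK (by linarith))
    using 1
  rw [hmean, hvar]
  field_simp

end Chebyshev

section Beta

variable {a b : ℝ}

lemma setIntegral_Ioo_rpow_mul_one_sub_rpow (ha : 0 < a) (hb : 0 < b) :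
    ∫ y in Ioo (0 : ℝ) 1, y ^ (a - 1) * (1 - y) ^ (b - 1) = beta a b := by
  rw [beta_eq_betaIntegralReal a b ha hb, Complex.betaIntegral,
    intervalIntegral.integral_of_le zero_le_one, ← integral_Ioc_eq_integral_Ioo,
    ← RCLike.re_to_complex, ← integral_re]
  · refine setIntegral_congr_fun measurableSet_Ioc fun y ⟨hy0, hy1⟩ => ?_
    norm_cast
    rw [← Complex.ofReal_cpow hy0.le, ← Complex.ofReal_cpow (by linarith), RCLike.re_to_complex,
      Complex.re_mul_ofReal, Complex.ofReal_re]
  · exact (intervalIntegrable_iff_integrableOn_Ioc_of_le zero_le_one).mp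
      (Complex.betaIntegral_convergent (by simpa) (by simpa))

lemma beta_add_one_left (ha : 0 < a) (hb : 0 < b) :
    beta (a + 1) b = a / (a + b) * beta a b := by
  have hab : 0 < a + b := by linarith
  rw [beta, beta, Real.Gamma_add_one ha.ne', add_right_comm, Real.Gamma_add_one hab.ne']
  field_simp

lemma integral_betaMeasure (ha : 0 < a) (hb : 0 < b) (φ : ℝ → ℝ) :
    ∫ x, φ x ∂_root_.betaMeasure a b =
      (∫ x in Ioo (0 : ℝ) 1, φ x * (x ^ (a - 1) * (1 - x) ^ (b - 1))) / beta a b := by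
  rw [_root_.betaMeasure, integral_withDensity_eq_integral_toReal_smul (by fun_prop)
    (ae_of_all _ fun _ => ENNReal.ofReal_lt_top), setIntegral_Ioo_rpow_mul_one_sub_rpow ha hb,
    ← integral_div]
  refine setIntegral_congr_fun measurableSet_Ioo fun x ⟨hx0, hx1⟩ => ?_
  rw [ENNReal.toReal_ofReal (by have := beta_pos ha hb; positivity), smul_eq_mul]
  ring

lemma setIntegral_Ioo_pow_mul_rpow_mul_one_sub_rpow (ha : 0 < a) (hb : 0 < b) (n : ℕ) :
    ∫ x in Ioo (0 : ℝ) 1, x ^ n * (x ^ (a - 1) * (1 - x) ^ (b - 1)) = beta (a + n) b := by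
  rw [← setIntegral_Ioo_rpow_mul_one_sub_rpow (by positivity) hb]
  refine setIntegral_congr_fun measurableSet_Ioo fun x hx => ?_
  rw [add_sub_right_comm, Real.rpow_add hx.1, Real.rpow_natCast]
  ring

lemma integral_id_betaMeasure (ha : 0 < a) (hb : 0 < b) :
    ∫ x, x ∂_root_.betaMeasure a b = a / (a + b) := by
  have h := setIntegral_Ioo_pow_mul_rpow_mul_one_sub_rpow ha hb 1
  simp only [pow_one, Nat.cast_one] at h
  rw [integral_betaMeasure ha hb, h, beta_add_one_left ha hb,
    mul_div_cancel_right₀ _ (beta_pos ha hb).ne']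

lemma integral_sq_betaMeasure (ha : 0 < a) (hb : 0 < b) :
    ∫ x, x ^ 2 ∂_root_.betaMeasure a b = a * (a + 1) / ((a + b) * (a + b + 1)) := by
  have h := setIntegral_Ioo_pow_mul_rpow_mul_one_sub_rpow ha hb 2
  rw [integral_betaMeasure ha hb, h, Nat.cast_two, show a + 2 = a + 1 + 1 by ring,
    beta_add_one_left (by linarith) hb, beta_add_one_left ha hb]
  have := beta_pos ha hb
  field_simp
  ring

lemma betaMeasure_compl_Ioo (a b : ℝ) : _root_.betaMeasure a b (Ioo 0 1)ᶜ = 0 := by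
  rw [_root_.betaMeasure, withDensity_apply _ measurableSet_Ioo.compl,
    Measure.restrict_restrict measurableSet_Ioo.compl, compl_inter_self,
    Measure.restrict_empty, lintegral_zero_measure]

end Beta

namespace ProbabilityTheory.HasLaw

variable {Ω : Type*} [MeasurableSpace Ω] {P : Measure Ω} {W : Ω → ℝ} {a b : ℝ}

lemma memLp_two_of_betaMeasure [IsFiniteMeasure P] (hW : HasLaw W (_root_.betaMeasure a b) P) :
    MemLp W 2 P := by
  have hIoo : ∀ᵐ ω ∂P, W ω ∈ Ioo (0 : ℝ) 1 :=
    (hW.ae_iff measurableSet_Ioo.mem).mpr (measure_eq_zero_iff_ae_notMem.mp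
      (betaMeasure_compl_Ioo a b) |>.mono fun _ hx => not_not.mp hx)
  refine MemLp.of_bound hW.aemeasurable.aestronglyMeasurable 1 (hIoo.mono fun ω hω => ?_)
  rw [Real.norm_eq_abs, abs_le]
  exact ⟨by linarith [hω.1], hω.2.le⟩

lemma integral_eq_of_betaMeasure (hW : HasLaw W (_root_.betaMeasure a b) P)
    (ha : 0 < a) (hb : 0 < b) : P[W] = a / (a + b) := by
  rw [hW.integral_eq, integral_id_betaMeasure ha hb]

lemma variance_eq_of_betaMeasure [IsProbabilityMeasure P]
    (hW : HasLaw W (_root_.betaMeasure a b) P) (ha : 0 < a) (hb : 0 < b) :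
    Var[W; P] = a / (a + b) * (1 - a / (a + b)) / (1 + (a + b)) := by
  have hsq : P[W ^ 2] = a * (a + 1) / ((a + b) * (a + b + 1)) := by
    rw [← integral_sq_betaMeasure ha hb, ← hW.integral_comp (by fun_prop)]
    rfl
  rw [variance_eq_sub hW.memLp_two_of_betaMeasure, hsq, hW.integral_eq_of_betaMeasure ha hb]
  have : 0 < a + b := by linarith
  field_simp
  ring

end ProbabilityTheory.HasLaw

lemma mul_one_sub_le_mul_one_sub {x y : ℝ} (hxy : x ≤ y) (hsum : x + y ≤ 1) :
    x * (1 - x) ≤ y * (1 - y) := by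
  nlinarith [mul_nonneg (sub_nonneg.mpr hxy) (by linarith : 0 ≤ 1 - x - y)]

/-- Let `c > 0` and `αi, βi, αj, βj > 0` with `αi + βi = αj + βj = c`,
`αi < αj`, and `αj ≤ βj`. Let `K ≥ 1`, let `X₁, …, X_K` be i.i.d. samples from the Beta
distribution `B(αi, βi)` and `Y₁, …, Y_K` i.i.d. samples from `B(αj, βj)`, with all `2K`
variables jointly independent. Writing `μi = αi/c`, `μj = αj/c`,
`σi² = μi(1−μi)/(1+c)`, `σj² = μj(1−μj)/(1+c)`, and letting `X̄, Ȳ` be the sample means,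
`P(X̄ ≥ Ȳ) ≤ (σi² + σj²)/(K (μj − μi)²) ≤ 2 σj²/(K (μj − μi)²)`. -/
theorem prob_sampleMean_ge_le_of_beta
    {Ω : Type*} [MeasurableSpace Ω] {P : Measure Ω} [IsProbabilityMeasure P]
    (c αi βi αj βj : ℝ) (hc : 0 < c)
    (hαi : 0 < αi) (hβi : 0 < βi) (hαj : 0 < αj) (hβj : 0 < βj)
    (hi : αi + βi = c) (hj : αj + βj = c) (hij : αi < αj) (hjb : αj ≤ βj)
    (K : ℕ) (hK : 1 ≤ K) (X Y : Fin K → Ω → ℝ)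
    (hXmeas : ∀ k, Measurable (X k)) (hYmeas : ∀ k, Measurable (Y k))
    (hindep : iIndepFun (Sum.elim X Y) P)
    (hXlaw : ∀ k, Measure.map (X k) P = _root_.betaMeasure αi βi)
    (hYlaw : ∀ k, Measure.map (Y k) P = _root_.betaMeasure αj βj)
    (μi μj σi2 σj2 : ℝ)
    (hμi : μi = αi / c) (hμj : μj = αj / c)
    (hσi : σi2 = μi * (1 - μi) / (1 + c)) (hσj : σj2 = μj * (1 - μj) / (1 + c)) :
    (P {ω | (∑ k, X k ω) / K ≥ (∑ k, Y k ω) / K}).toReal ≤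
        (σi2 + σj2) / (K * (μj - μi) ^ 2) ∧
      (σi2 + σj2) / (K * (μj - μi) ^ 2) ≤ 2 * σj2 / (K * (μj - μi) ^ 2) := by
  have : NeZero K := ⟨by omega⟩
  have hX : ∀ k, HasLaw (X k) (_root_.betaMeasure αi βi) P :=
    fun k => ⟨(hXmeas k).aemeasurable, hXlaw k⟩
  have hY : ∀ k, HasLaw (Y k) (_root_.betaMeasure αj βj) P :=
    fun k => ⟨(hYmeas k).aemeasurable, hYlaw k⟩
  have hμ : μi < μj := by rw [hμi, hμj]; exact div_lt_div_of_pos_right hij hc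
  have hμj_le : μj ≤ 1 / 2 := by
    rw [hμj, div_le_iff₀ hc]; linarith
  have hset : {ω | (∑ k, X k ω) / K ≥ (∑ k, Y k ω) / K} = {ω | ∑ k, Y k ω ≤ ∑ k, X k ω} := by
    ext ω
    exact div_le_div_iff_of_pos_right (by positivity : (0 : ℝ) < K)
  constructor
  · rw [hset, ← measureReal_def]
    convert measureReal_sum_le_sum_le hindep (fun k => (hX k).memLp_two_of_betaMeasure)
      (fun k => (hY k).memLp_two_of_betaMeasure) (fun k => ?_) (fun k => ?_) (fun k => ?_)
      (fun k => ?_) hμ using 3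
    · rw [Fintype.card_fin]
    · rw [(hX k).integral_eq_of_betaMeasure hαi hβi, hi, hμi]
    · rw [(hY k).integral_eq_of_betaMeasure hαj hβj, hj, hμj]
    · rw [(hX k).variance_eq_of_betaMeasure hαi hβi, hi, hσi, hμi]
    · rw [(hY k).variance_eq_of_betaMeasure hαj hβj, hj, hσj, hμj]
  · have hσ : σi2 ≤ σj2 := by
      rw [hσi, hσj]
      exact div_le_div_of_nonneg_right (mul_one_sub_le_mul_one_sub hμ.le (by linarith))
        (by linarith)
    gcongr
    linarith
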